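/- Let A be a real m×n matrix with m < n. Then Aᵀ has the partial weak range space property (PWRSP) of order K if and only if every x ∈ ℝ^n with x ≥ 0, ‖x‖₀ = K, and A_{J₊} of full column rank (where J₊ = {i : xᵢ > 0}) is the unique least ℓ1-norm nonnegative solution to the system Az = Ax. -/

import Mathlib

open Matrix

/-- The column submatrix `A_S` has full column rank. -/
def fullColRank {m n : ℕ} (A : Matrix (Fin m) (Fin n) ℝ) (S : Finset (Fin n)) : Prop :=
  LinearIndependent ℝ (fun j : {i : Fin n // i ∈ S} => fun k : Fin m => A k j.1)

/-- `Aᵀ` has the partial weak range space property (PWRSP) of order `K`. -/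
def PWRSPorder {m n : ℕ} (A : Matrix (Fin m) (Fin n) ℝ) (K : ℕ) : Prop :=
  ∀ S : Finset (Fin n), S.card = K → fullColRank A S →
    ∃ η : Fin n → ℝ, (∃ u : Fin m → ℝ, A.transpose.mulVec u = η) ∧
      (∀ i ∈ S, η i = 1) ∧ (∀ i ∉ S, η i < 1)

/-- `x` is the unique least ℓ1-norm nonnegative solution to the system `A z = y`. -/
def uniqueLeastL1 {m n : ℕ} (A : Matrix (Fin m) (Fin n) ℝ) (y : Fin m → ℝ)
    (x : Fin n → ℝ) : Prop :=
  A.mulVec x = y ∧ 0 ≤ x ∧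
    ∀ z : Fin n → ℝ, A.mulVec z = y → 0 ≤ z → z ≠ x → ∑ i, |x i| < ∑ i, |z i|

/-!
If `η = Aᵀ u` equals `1` on the support `S` of `x ≥ 0` and is `< 1` off it, then every
feasible `z ≥ 0` has `‖x‖₁ = ⟪η, x⟫ = ⟪u, A x⟫ = ⟪η, z⟫ ≤ ‖z‖₁`, with equality only if `z` is
supported on `S`, where injectivity of `A_S` forces `z = x`.

Conversely, perturbing the indicator `x` of `S` to `x + t d` shows that uniqueness at `x` means:
every nonzero `d ∈ ker A` that is nonnegative off `S` has positive coordinate sum. Separating the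
open orthant on `Sᶜ` from the affine space `{1 - Aᵀ u : (Aᵀ u)_S = 1}` turns this into the
existence of such an `η`, in the manner of Stiemke's theorem of the alternative.
-/

open Set Filter Topology

theorem Submodule.mem_of_forall_dotProduct_eq_zero {K ι : Type*} [Field K] [Fintype ι]
    {W : Submodule K (ι → K)} {y : ι → K}
    (h : ∀ v : ι → K, (∀ w ∈ W, v ⬝ᵥ w = 0) → v ⬝ᵥ y = 0) : y ∈ W := by
  classical
  by_contra hy
  obtain ⟨f, hfy, hfW⟩ := W.exists_dual_map_eq_bot_of_notMem hy inferInstance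
  have hf : ∀ w, (dotProductEquiv K ι).symm f ⬝ᵥ w = f w := fun w => by
    rw [← dotProductEquiv_apply_apply, LinearEquiv.apply_symm_apply]
  rw [← hf] at hfy
  refine hfy (h _ fun w hw => ?_)
  rw [hf, ← Submodule.mem_bot K, ← hfW]
  exact Submodule.mem_map_of_mem hw

theorem nonpos_of_forall_pos_mul_le {c s : ℝ} (h : ∀ t : ℝ, 0 < t → t * c ≤ s) : c ≤ 0 := by
  by_contra! hc
  have := h ((|s| + 1) / c) (by positivity)
  rw [div_mul_cancel₀ _ hc.ne'] at this
  linarith [le_abs_self s]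

theorem eq_zero_of_forall_le_add_mul {a c s : ℝ} (h : ∀ t : ℝ, s ≤ a + t * c) : c = 0 := by
  have h₁ : c ≤ 0 := nonpos_of_forall_pos_mul_le (s := a - s) fun t _ => by
    linarith [h (-t), neg_mul t c]
  have h₂ : -c ≤ 0 := nonpos_of_forall_pos_mul_le (s := a - s) fun t _ => by
    linarith [h t, mul_neg t c]
  linarith

theorem nonneg_and_nonpos_on_pi_Ici_of_lt_on_pi_Ioi {ι : Type*} {T : Set ι}
    {f : (ι → ℝ) →L[ℝ] ℝ} {s : ℝ} (h : ∀ o ∈ T.pi fun _ => Ioi 0, f o < s) :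
    0 ≤ s ∧ ∀ o ∈ T.pi fun _ => Ici 0, f o ≤ 0 := by
  have hle : T.pi (fun _ => Ici 0) ⊆ {o | f o ≤ s} := by
    have : closure (T.pi fun _ => Ioi 0) ⊆ {o | f o ≤ s} :=
      (isClosed_le f.continuous continuous_const).closure_subset_iff.2 fun o ho => (h o ho).le
    rwa [closure_pi_set, funext fun _ => closure_Ioi (0 : ℝ)] at this
  refine ⟨by simpa using hle (a := 0) fun _ _ => by simp, fun o ho => ?_⟩
  refine nonpos_of_forall_pos_mul_le (s := s) fun t ht => ?_
  have : f (t • o) ≤ s := hle fun i hi => by simpa using mul_nonneg ht.le (ho i hi)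
  rwa [map_smul, smul_eq_mul] at this

theorem exists_mem_forall_pos_add_of_dotProduct_pos {ι : Type*} [Fintype ι]
    (L : Submodule ℝ (ι → ℝ)) (T : Set ι) (w₀ : ι → ℝ)
    (h : ∀ q : ι → ℝ, 0 ≤ q → (∀ i ∉ T, q i = 0) → q ≠ 0 → (∀ l ∈ L, q ⬝ᵥ l = 0) →
      0 < q ⬝ᵥ w₀) :
    ∃ l ∈ L, ∀ i ∈ T, 0 < w₀ i + l i := by
  classical
  by_contra! hno
  have hdisj : Disjoint (T.pi fun _ => Ioi 0) ((w₀ + ·) '' L) := by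
    rw [Set.disjoint_left]
    rintro _ hO ⟨l, hl, rfl⟩
    obtain ⟨i, hi, hle⟩ := hno l hl
    exact (hO i hi).not_ge hle
  obtain ⟨f, s, hfO, hfM⟩ := geometric_hahn_banach_open (convex_pi fun _ _ => convex_Ioi 0)
    (isOpen_set_pi T.toFinite fun _ _ => isOpen_Ioi) (L.convex.translate w₀) hdisj
  obtain ⟨hs, hf_cone⟩ := nonneg_and_nonpos_on_pi_Ici_of_lt_on_pi_Ioi hfO
  set p := (dotProductEquiv ℝ ι).symm (f : (ι → ℝ) →ₗ[ℝ] ℝ)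
  have hfp : ∀ w, f w = p ⬝ᵥ w := fun w => by
    rw [← dotProductEquiv_apply_apply, LinearEquiv.apply_symm_apply]; rfl
  have hp_single : ∀ i (t : ℝ), i ∉ T ∨ 0 ≤ t → p i * t ≤ 0 := fun i t ht => by
    rw [← dotProduct_single, ← hfp]
    refine hf_cone _ fun j hj => ?_
    by_cases hji : j = i
    · subst hji
      simpa [hj] using ht
    · simp [hji]
  have hpL : ∀ l ∈ L, p ⬝ᵥ l = 0 := fun l hl => by
    refine eq_zero_of_forall_le_add_mul (a := f w₀) (s := s) fun t => ?_
    have := hfM (w₀ + t • l) ⟨t • l, L.smul_mem t hl, rfl⟩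
    rwa [map_add, map_smul, smul_eq_mul, hfp l] at this
  have hsw₀ : s ≤ f w₀ := hfM w₀ ⟨0, L.zero_mem, add_zero w₀⟩
  have hp : p ≠ 0 := by
    rintro hp
    have := hfO (fun _ => 1) fun _ _ => Set.mem_Ioi.2 one_pos
    simp only [hfp, hp, zero_dotProduct] at this hsw₀
    linarith
  have hq := h (-p) (fun i => ?_) (fun i hi => ?_) (neg_ne_zero.2 hp)
    (fun l hl => by rw [neg_dotProduct, hpL l hl, neg_zero])
  · rw [neg_dotProduct, ← hfp] at hq
    linarith
  · simpa using hp_single i 1 (em' _ |>.imp id fun _ => zero_le_one)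
  · rw [Pi.neg_apply, neg_eq_zero]
    linarith [hp_single i 1 (.inl hi), hp_single i (-1) (.inl hi)]

theorem sum_abs_of_nonneg {ι : Type*} [Fintype ι] {x : ι → ℝ} (hx : 0 ≤ x) :
    ∑ i, |x i| = ∑ i, x i :=
  Finset.sum_congr rfl fun i _ => abs_of_nonneg (hx i)

section

variable {m n : ℕ} {A : Matrix (Fin m) (Fin n) ℝ} {S : Finset (Fin n)}

theorem fullColRank_iff_linearIndependent {p : Fin n → Prop} (h : ∀ i, i ∈ S ↔ p i) :
    fullColRank A S ↔ LinearIndependent ℝ (fun j : {i // p i} => fun k : Fin m => A k j.1) :=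
  linearIndependent_equiv' (Equiv.subtypeEquivRight h) rfl

theorem fullColRank.eq_zero_of_mulVec_eq_zero (hS : fullColRank A S) {w : Fin n → ℝ}
    (hw : ∀ i ∉ S, w i = 0) (hAw : A *ᵥ w = 0) : w = 0 := by
  have hsum : ∑ j : S, w j • (fun k => A k j) = A *ᵥ w := by
    ext k
    rw [Finset.sum_apply, mulVec, dotProduct,
      ← Finset.sum_subset (Finset.subset_univ S) fun i _ hi => by simp [hw i hi]]
    simpa [mul_comm] using Finset.sum_attach S fun i => A k i * w i
  have := Fintype.linearIndependent_iff.1 hS (fun j => w j) (hsum.trans hAw)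
  funext i
  by_cases hi : i ∈ S
  · exact this ⟨i, hi⟩
  · exact hw i hi

theorem fullColRank.exists_transpose_mulVec_eq_one (hS : fullColRank A S) :
    ∃ u, ∀ j ∈ S, (Aᵀ *ᵥ u) j = 1 := by
  have : (fun _ => (1 : ℝ)) ∈ LinearMap.range Aᵀ.mulVecLin ⊔ Submodule.pi ↑S fun _ => ⊥ := by
    refine Submodule.mem_of_forall_dotProduct_eq_zero fun v hv => ?_
    have hAv : A *ᵥ v = 0 := dotProduct_eq_zero _ fun u => by
      rw [← vecMul_transpose, ← dotProduct_mulVec]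
      exact hv _ (Submodule.mem_sup_left ⟨u, rfl⟩)
    have hvS : ∀ i ∉ S, v i = 0 := fun i hi => by
      simpa using hv (Pi.single i 1) (Submodule.mem_sup_right <| Submodule.mem_pi.2
        fun j hj => by simp [show j ≠ i by rintro rfl; exact hi hj])
    simp [hS.eq_zero_of_mulVec_eq_zero hvS hAv]
  obtain ⟨_, ⟨u, rfl⟩, r, hr, hsum⟩ := Submodule.mem_sup.1 this
  refine ⟨u, fun j hj => ?_⟩
  have := congrFun hsum j
  rwa [Pi.add_apply, (Submodule.mem_bot ℝ).1 (Submodule.mem_pi.1 hr j hj), add_zero] at this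

theorem exists_supported_mulVec_eq {q : Fin n → ℝ}
    (hq : ∀ v, (∀ j ∈ S, (Aᵀ *ᵥ v) j = 0) → q ⬝ᵥ Aᵀ *ᵥ v = 0) :
    ∃ c : Fin n → ℝ, (∀ i ∉ S, c i = 0) ∧ A *ᵥ c = A *ᵥ q := by
  have : A *ᵥ q ∈ (Submodule.pi (↑S)ᶜ fun _ => ⊥).map A.mulVecLin := by
    refine Submodule.mem_of_forall_dotProduct_eq_zero fun v hv => ?_
    rw [dotProduct_mulVec, ← mulVec_transpose, dotProduct_comm]
    refine hq v fun j hj => ?_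
    have hj₁ : Pi.single j 1 ∈ Submodule.pi (↑S)ᶜ fun _ => (⊥ : Submodule ℝ ℝ) :=
      Submodule.mem_pi.2 fun i hi => by simp [show i ≠ j by rintro rfl; exact hi hj]
    have := hv _ (Submodule.mem_map_of_mem (f := A.mulVecLin) hj₁)
    rwa [Matrix.mulVecLin_apply, dotProduct_mulVec, ← mulVec_transpose, dotProduct_single,
      mul_one] at this
  obtain ⟨c, hc, hAc⟩ := Submodule.mem_map.1 this
  exact ⟨c, fun i hi => (Submodule.mem_bot ℝ).1 (Submodule.mem_pi.1 hc i hi), hAc⟩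

theorem dotProduct_one_sub_transpose_mulVec_pos
    (hsum : ∀ d, A *ᵥ d = 0 → (∀ i ∉ S, 0 ≤ d i) → d ≠ 0 → 0 < ∑ i, d i)
    {u₀ : Fin m → ℝ} (hu₀ : ∀ j ∈ S, (Aᵀ *ᵥ u₀) j = 1) {q : Fin n → ℝ} (hq0 : 0 ≤ q)
    (hqS : ∀ i ∈ S, q i = 0) (hq : q ≠ 0)
    (hqL : ∀ v, (∀ j ∈ S, (Aᵀ *ᵥ v) j = 0) → q ⬝ᵥ Aᵀ *ᵥ v = 0) :
    0 < q ⬝ᵥ (1 - Aᵀ *ᵥ u₀) := by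
  obtain ⟨c, hcS, hAc⟩ := exists_supported_mulVec_eq hqL
  have hc : c ⬝ᵥ (1 - Aᵀ *ᵥ u₀) = 0 := Finset.sum_eq_zero fun i _ => by
    by_cases hi : i ∈ S
    · simp [hu₀ i hi]
    · simp [hcS i hi]
  have hAd : A *ᵥ (q - c) = 0 := by rw [mulVec_sub, hAc, sub_self]
  have hd : q - c ≠ 0 := fun hd => hq <| funext fun i => by
    by_cases hi : i ∈ S
    · exact hqS i hi
    · simpa [hcS i hi] using congrFun hd i
  calc 0 < ∑ i, (q - c) i := hsum _ hAd (fun i hi => by simpa [hcS i hi] using hq0 i) hd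
    _ = (q - c) ⬝ᵥ (1 - Aᵀ *ᵥ u₀) := by
      rw [dotProduct_sub, dotProduct_one, dotProduct_mulVec, vecMul_transpose, hAd,
        zero_dotProduct, sub_zero]
    _ = q ⬝ᵥ (1 - Aᵀ *ᵥ u₀) := by rw [sub_dotProduct, hc, sub_zero]

theorem fullColRank.exists_dual_certificate (hS : fullColRank A S)
    (hsum : ∀ d, A *ᵥ d = 0 → (∀ i ∉ S, 0 ≤ d i) → d ≠ 0 → 0 < ∑ i, d i) :
    ∃ u, (∀ i ∈ S, (Aᵀ *ᵥ u) i = 1) ∧ ∀ i ∉ S, (Aᵀ *ᵥ u) i < 1 := by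
  obtain ⟨u₀, hu₀⟩ := hS.exists_transpose_mulVec_eq_one
  obtain ⟨_, ⟨⟨v, rfl⟩, hvS⟩, hpos⟩ := exists_mem_forall_pos_add_of_dotProduct_pos
    (LinearMap.range Aᵀ.mulVecLin ⊓ Submodule.pi ↑S fun _ => ⊥) (↑S)ᶜ (1 - Aᵀ *ᵥ u₀)
    fun q hq0 hqS hq hqL => dotProduct_one_sub_transpose_mulVec_pos hsum hu₀ hq0
      (fun i hi => hqS i (by simpa using hi)) hq
      fun v hv => hqL _ ⟨⟨v, rfl⟩, Submodule.mem_pi.2 hv⟩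
  refine ⟨u₀ - v, fun i hi => ?_, fun i hi => ?_⟩
  · have hvi : (Aᵀ *ᵥ v) i = 0 := Submodule.mem_pi.1 hvS i hi
    simp [mulVec_sub, hu₀ i hi, hvi]
  · have := hpos i hi
    simp only [Matrix.mulVecLin_apply, Pi.sub_apply, Pi.one_apply] at this
    rw [mulVec_sub, Pi.sub_apply]
    linarith

theorem fullColRank.uniqueLeastL1_of_dual_certificate (hS : fullColRank A S) {u : Fin m → ℝ}
    (h1 : ∀ i ∈ S, (Aᵀ *ᵥ u) i = 1) (hlt : ∀ i ∉ S, (Aᵀ *ᵥ u) i < 1) {x : Fin n → ℝ}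
    (hx : 0 ≤ x) (hxS : ∀ i ∉ S, x i = 0) : uniqueLeastL1 A (A *ᵥ x) x := by
  refine ⟨rfl, hx, fun z hz hz0 hzx => ?_⟩
  have hdual : ∀ w, (Aᵀ *ᵥ u) ⬝ᵥ w = u ⬝ᵥ A *ᵥ w := fun w => by
    rw [dotProduct_mulVec, mulVec_transpose]
  obtain ⟨i₀, hi₀, hzi₀⟩ : ∃ i ∉ S, 0 < z i := by
    by_contra! hzS
    refine hzx (sub_eq_zero.1 (hS.eq_zero_of_mulVec_eq_zero (fun i hi => ?_)
      (by rw [mulVec_sub, hz, sub_self])))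
    rw [Pi.sub_apply, le_antisymm (hzS i hi) (hz0 i), hxS i hi, sub_zero]
  have hle : ∀ i, (Aᵀ *ᵥ u) i ≤ 1 := fun i => by
    by_cases hi : i ∈ S
    · exact (h1 i hi).le
    · exact (hlt i hi).le
  calc ∑ i, |x i| = (Aᵀ *ᵥ u) ⬝ᵥ x := by
        rw [sum_abs_of_nonneg hx]
        refine Finset.sum_congr rfl fun i _ => ?_
        by_cases hi : i ∈ S
        · rw [h1 i hi, one_mul]
        · rw [hxS i hi, mul_zero]
    _ = (Aᵀ *ᵥ u) ⬝ᵥ z := by rw [hdual, hdual, hz]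
    _ < ∑ i, z i := Finset.sum_lt_sum (fun i _ => mul_le_of_le_one_left (hz0 i) (hle i))
        ⟨i₀, Finset.mem_univ _, mul_lt_of_lt_one_left hzi₀ (hlt i₀ hi₀)⟩
    _ = ∑ i, |z i| := (sum_abs_of_nonneg hz0).symm

theorem uniqueLeastL1.sum_pos {x : Fin n → ℝ} (hx : uniqueLeastL1 A (A *ᵥ x) x)
    {d : Fin n → ℝ} (hd : A *ᵥ d = 0) (hdx : ∀ i, x i = 0 → 0 ≤ d i) (hd0 : d ≠ 0) :
    0 < ∑ i, d i := by
  obtain ⟨-, hx0, hmin⟩ := hx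
  have hfeasible : ∀ᶠ t in 𝓝[>] (0 : ℝ), 0 ≤ x + t • d := by
    simp only [Pi.le_def, Pi.zero_apply, Pi.add_apply, Pi.smul_apply, smul_eq_mul]
    refine eventually_all.2 fun i => ?_
    rcases (hx0 i).eq_or_lt with hxi | hxi
    · filter_upwards [self_mem_nhdsWithin] with t ht
      rw [← hxi, Pi.zero_apply, zero_add]
      exact mul_nonneg (le_of_lt ht) (hdx i hxi.symm)
    · have : Tendsto (fun t : ℝ => x i + t * d i) (𝓝 0) (𝓝 (x i)) := by
        simpa using (by fun_prop : Continuous fun t : ℝ => x i + t * d i).tendsto 0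
      exact ((this.eventually (lt_mem_nhds hxi)).filter_mono nhdsWithin_le_nhds).mono
        fun _ => le_of_lt
  obtain ⟨t, hxt, ht⟩ := (hfeasible.and self_mem_nhdsWithin).exists
  have := hmin (x + t • d) (by rw [mulVec_add, mulVec_smul, hd, smul_zero, add_zero]) hxt
    (by simpa [ht.ne'] using hd0)
  rw [sum_abs_of_nonneg hx0, sum_abs_of_nonneg hxt] at this
  simp only [Pi.add_apply, Pi.smul_apply, smul_eq_mul, Finset.sum_add_distrib,
    ← Finset.mul_sum] at this
  exact pos_of_mul_pos_right (by linarith) (le_of_lt ht)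

end

theorem stmt_18_general {m n : ℕ} (A : Matrix (Fin m) (Fin n) ℝ) (K : ℕ) :
    PWRSPorder A K ↔
      ∀ x : Fin n → ℝ, 0 ≤ x → {i : Fin n | x i ≠ 0}.ncard = K →
        LinearIndependent ℝ (fun j : {i : Fin n // 0 < x i} =>
          fun k : Fin m => A k j.1) →
        uniqueLeastL1 A (A.mulVec x) x := by
  constructor
  · intro hP x hx hcard hli
    set S := Finset.univ.filter fun i => 0 < x i
    have hmem : ∀ i, i ∈ S ↔ 0 < x i := by simp [S]
    have hS : fullColRank A S := (fullColRank_iff_linearIndependent hmem).2 hli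
    have hsupp : {i | x i ≠ 0} = ↑S := by ext i; simpa [S] using hx i
    obtain ⟨_, ⟨u, rfl⟩, h1, hlt⟩ := hP S (by rw [← hcard, hsupp, Set.ncard_coe_finset]) hS
    exact hS.uniqueLeastL1_of_dual_certificate h1 hlt hx fun i hi =>
      le_antisymm (not_lt.1 ((hmem i).not.1 hi)) (hx i)
  · intro h S hcard hS
    set x : Fin n → ℝ := fun i => if i ∈ S then 1 else 0
    have hmem : ∀ i, i ∈ S ↔ 0 < x i := fun i => by by_cases hi : i ∈ S <;> simp [x, hi]
    have hsupp : {i | x i ≠ 0} = ↑S := by ext i; by_cases hi : i ∈ S <;> simp [x, hi]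
    have hx := h x (fun i => by by_cases hi : i ∈ S <;> simp [x, hi])
      (by rw [hsupp, Set.ncard_coe_finset, hcard]) ((fullColRank_iff_linearIndependent hmem).1 hS)
    obtain ⟨u, h1, hlt⟩ := hS.exists_dual_certificate fun d hd hdS hd0 =>
      hx.sum_pos hd (fun i hi => hdS i fun hiS => by simp [x, hiS] at hi) hd0
    exact ⟨_, ⟨u, rfl⟩, h1, hlt⟩

theorem stmt_18 {m n : ℕ} (hmn : m < n) (A : Matrix (Fin m) (Fin n) ℝ) (K : ℕ) :
    PWRSPorder A K ↔
      ∀ x : Fin n → ℝ, 0 ≤ x → {i : Fin n | x i ≠ 0}.ncard = K →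
        LinearIndependent ℝ (fun j : {i : Fin n // 0 < x i} =>
          fun k : Fin m => A k j.1) →
        uniqueLeastL1 A (A.mulVec x) x :=
  stmt_18_general A K
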